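/- Let V be a commutative unital quantale and F : Set → Set a functor. Then F has a separating class of monotone predicate liftings if and only if there exists a lax extension F̂ of F such that for every set X the V-category (FX, F̂1_X) is separated. -/
import Mathlib


/-!
Common framework: commutative unital quantales, `V`-relations, lax extensions,
predicate liftings, Moss liftings and the Kantorovich extension.
-/

universe u

namespace Paper

variable {V : Type u} [CommMonoid V] [CompleteLattice V]

/-- A `V`-relation `X ⇸ Y` is a map `X → Y → V`. -/
abbrev VRel (V : Type u) (X Y : Type u) : Type u := X → Y → V

/-- Composition of `V`-relations: `(s · r)(x,z) = ⨆ y, r x y ⊗ s y z`. -/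
def vcomp {X Y Z : Type u} (s : VRel V Y Z) (r : VRel V X Y) : VRel V X Z :=
  fun x z => ⨆ y, r x y * s y z

/-- The internal hom of the quantale: `hom u w = ⨆ {v | u ⊗ v ≤ w}`. -/
def qhom (u w : V) : V := sSup {v | u * v ≤ w}

/-- The lift `s ⊸ r` of `r : X ⇸ Z` along `s : Y ⇸ Z`. -/
def vlift {X Y Z : Type u} (s : VRel V Y Z) (r : VRel V X Z) : VRel V X Y :=
  fun x y => ⨅ z, qhom (s y z) (r x z)

/-- The extension `r ⟜ s` of `r : Y ⇸ Z` along `s : Y ⇸ X`. -/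
def vext {X Y Z : Type u} (r : VRel V Y Z) (s : VRel V Y X) : VRel V X Z :=
  fun x z => ⨅ y, qhom (s y x) (r y z)

/-- Converse of a `V`-relation. -/
def vconv {X Y : Type u} (r : VRel V X Y) : VRel V Y X := fun y x => r x y

/-- A function `f : X → Y` viewed as a `V`-relation `f_∘ : X ⇸ Y`. -/
def graph {X Y : Type u} (f : X → Y) : VRel V X Y :=
  fun x y => ⨆ _ : f x = y, (1 : V)

/-- The identity `V`-relation `1_X : X ⇸ X`. -/
def idRel (V : Type u) [CommMonoid V] [CompleteLattice V] (X : Type u) : VRel V X X :=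
  fun x y => ⨆ _ : x = y, (1 : V)

/-- The `V`-category structure `[r,s]` on `V`-relations `X ⇸ Y`. -/
def brkt {X Y : Type u} (r s : VRel V X Y) : V :=
  ⨅ (x : X), ⨅ (y : Y), qhom (r x y) (s x y)

/-- A lax extension of a `Set`-functor `F` to `V`-relations. -/
structure LaxExt (V : Type u) [CommMonoid V] [CompleteLattice V]
    (F : Type u → Type u) [Functor F] where
  ext : ∀ {X Y : Type u}, VRel V X Y → VRel V (F X) (F Y)
  mono : ∀ {X Y : Type u} {r r' : VRel V X Y}, r ≤ r' → ext r ≤ ext r'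
  lax_comp : ∀ {X Y Z : Type u} (r : VRel V X Y) (s : VRel V Y Z),
    vcomp (ext s) (ext r) ≤ ext (vcomp s r)
  map_le : ∀ {X Y : Type u} (f : X → Y),
    graph (Functor.map f : F X → F Y) ≤ ext (graph f)
  map_conv_le : ∀ {X Y : Type u} (f : X → Y),
    vconv (graph (Functor.map f : F X → F Y)) ≤ ext (vconv (graph f))

/-- A `V`-enriched lax extension. -/
def LaxExt.Enriched {F : Type u → Type u} [Functor F] (E : LaxExt V F) : Prop :=
  ∀ (X Y : Type u) (r r' : VRel V X Y), brkt r r' ≤ brkt (E.ext r) (E.ext r')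

/-- A `κ`-ary predicate lifting of `F`, viewed relationally: it sends a
`V`-relation `f : X ⇸ κ` naturally to a `V`-relation `μ f : F X ⇸ 1`. -/
structure PredLift (V : Type u) [CommMonoid V] [CompleteLattice V]
    (F : Type u → Type u) [Functor F] (κ : Type u) where
  app : ∀ {X : Type u}, VRel V X κ → VRel V (F X) PUnit
  natural : ∀ {X Y : Type u} (h : X → Y) (g : VRel V Y κ),
    app (vcomp g (graph h)) = vcomp (app g) (graph (Functor.map h : F X → F Y))

/-- Monotonicity of a predicate lifting. -/
def PredLift.Monotone {F : Type u → Type u} [Functor F] {κ : Type u}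
    (μ : PredLift V F κ) : Prop :=
  ∀ {X : Type u} {f f' : VRel V X κ}, f ≤ f' → μ.app f ≤ μ.app f'

/-- `V`-enrichment of a predicate lifting. -/
def PredLift.Enriched {F : Type u → Type u} [Functor F] {κ : Type u}
    (μ : PredLift V F κ) : Prop :=
  ∀ (X : Type u) (f f' : VRel V X κ), brkt f f' ≤ brkt (μ.app f) (μ.app f')

/-- A predicate lifting is induced by a lax extension `E` if `μ f = 𝔯 · E f`
for some `𝔯 : F κ ⇸ 1`. -/
def PredLift.InducedBy {F : Type u → Type u} [Functor F] {κ : Type u}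
    (μ : PredLift V F κ) (E : LaxExt V F) : Prop :=
  ∃ rr : VRel V (F κ) PUnit, ∀ (X : Type u) (f : VRel V X κ),
    μ.app f = vcomp rr (E.ext f)

/-- The (underlying assignment of the) Moss lifting `μ^𝔨` of a lax extension,
determined by an element `𝔨 ∈ F κ`: `μ^𝔨 f = (𝔨_∘)° · E f`. -/
def mossApp {F : Type u → Type u} [Functor F] (E : LaxExt V F) {κ : Type u}
    (k : F κ) (X : Type u) (f : VRel V X κ) : VRel V (F X) PUnit :=
  vcomp (vconv (graph (fun _ : PUnit => k))) (E.ext f)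

/-- The Kantorovich extension of a `κ`-ary predicate-lifting assignment. -/
def kant {F : Type u → Type u} [Functor F] {κ : Type u}
    (μ : ∀ (X : Type u), VRel V X κ → VRel V (F X) PUnit)
    {X Y : Type u} (r : VRel V X Y) : VRel V (F X) (F Y) :=
  ⨅ g : VRel V Y κ, vlift (μ Y g) (μ X (vcomp g r))

/-- The Kantorovich extension of a predicate lifting. -/
def PredLift.kant {F : Type u → Type u} [Functor F] {κ : Type u}
    (μ : PredLift V F κ) {X Y : Type u} (r : VRel V X Y) : VRel V (F X) (F Y) :=
  Paper.kant (fun _ g => μ.app g) r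

/-- The evaluation `V`-relation `ev_κ : V^κ ⇸ κ`. -/
def evRel (V : Type u) [CommMonoid V] [CompleteLattice V] (κ : Type u) :
    VRel V (κ → V) κ :=
  fun φ i => φ i

end Paper

section AuxProof

open Paper

variable {V : Type u} [CommMonoid V] [CompleteLattice V] [IsQuantale V]

set_option linter.unusedSectionVars false
set_option linter.unusedVariables false

lemma mul_iSup' {ι : Sort*} (x : V) (f : ι → V) : x * ⨆ i, f i = ⨆ i, x * f i := by
  rw [iSup, mul_sSup_distrib, iSup_range]

lemma iSup_mul' {ι : Sort*} (x : V) (f : ι → V) : (⨆ i, f i) * x = ⨆ i, f i * x := by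
  rw [iSup, sSup_mul_distrib, iSup_range]

lemma le_qhom' {u v w : V} (h : u * v ≤ w) : v ≤ qhom u w := le_sSup h

lemma qhom_mul_le' (u w : V) : u * qhom u w ≤ w := by
  rw [qhom, mul_sSup_distrib]
  exact iSup₂_le fun v hv => hv

lemma one_le_qhom' {u w : V} (h : u ≤ w) : 1 ≤ qhom u w :=
  le_qhom' (by simpa using h)

lemma le_of_one_le_qhom' {u w : V} (h : 1 ≤ qhom u w) : u ≤ w :=
  calc u = u * 1 := (mul_one u).symm
    _ ≤ u * qhom u w := mul_le_mul_right h u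
    _ ≤ w := qhom_mul_le' u w

lemma qhom_mono {u w w' : V} (h : w ≤ w') : qhom u w ≤ qhom u w' :=
  sSup_le_sSup fun v hv => le_trans hv h

lemma vcomp_mono {X Y Z : Type u} {s s' : VRel V Y Z} {r r' : VRel V X Y}
    (hs : s ≤ s') (hr : r ≤ r') : vcomp s r ≤ vcomp s' r' := by
  intro x z
  exact iSup_mono fun y => mul_le_mul' (hr x y) (hs y z)

lemma vcomp_assoc' {X Y Z W : Type u} (t : VRel V Z W) (s : VRel V Y Z) (r : VRel V X Y) :
    vcomp t (vcomp s r) = vcomp (vcomp t s) r := by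
  funext x w
  simp only [vcomp, iSup_mul', mul_iSup']
  rw [iSup_comm]
  exact iSup_congr fun y => iSup_congr fun z => (mul_assoc _ _ _)

lemma vcomp_graph {X Y Z : Type u} (t : VRel V Y Z) (h : X → Y) :
    vcomp t (graph h) = fun x z => t (h x) z := by
  funext x z
  apply le_antisymm
  · refine iSup_le fun y => ?_
    simp only [graph, iSup_mul', one_mul]
    exact iSup_le fun hy => le_of_eq (by rw [hy])
  · refine le_iSup_of_le (h x) ?_
    calc t (h x) z = 1 * t (h x) z := (one_mul _).symm
      _ ≤ graph h x (h x) * t (h x) z :=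
          mul_le_mul_left (le_iSup (fun _ : h x = h x => (1 : V)) rfl) _

lemma vcomp_idRel' {X Z : Type u} (g : VRel V X Z) : vcomp g (idRel V X) = g := by
  have h : (idRel V X : VRel V X X) = graph (id : X → X) := rfl
  rw [h, vcomp_graph]
  rfl

lemma vcomp_graph_conv_le {X Y K : Type u} (g : VRel V Y K) (h : X → Y) :
    vcomp (vcomp g (graph h)) (vconv (graph h)) ≤ g := by
  intro y i
  refine iSup_le fun x' => ?_
  rw [vcomp_graph]
  simp only [vconv, graph, iSup_mul', one_mul]
  exact iSup_le fun hy => le_of_eq (by rw [hy])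

lemma le_vcomp_conv_graph {X Y K : Type u} (g : VRel V X K) (f : X → Y) :
    g ≤ vcomp (vcomp g (vconv (graph f))) (graph f) := by
  intro x i
  rw [vcomp_graph]
  refine le_iSup_of_le x ?_
  calc g x i = 1 * g x i := (one_mul _).symm
    _ ≤ vconv (graph f) (f x) x * g x i :=
        mul_le_mul_left (le_iSup (fun _ : f x = f x => (1 : V)) rfl) _

variable {F : Type u → Type u} [Functor F] [LawfulFunctor F]

lemma one_le_ext_idRel (E : LaxExt V F) {X : Type u} (t : F X) :
    (1 : V) ≤ E.ext (idRel V X) t t := by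
  have h := E.map_le (id : X → X) t t
  have h1 : (1 : V) ≤ graph (Functor.map (id : X → X) : F X → F X) t t := by
    refine le_iSup (fun _ : Functor.map id t = t => (1 : V)) ?_
    exact id_map t
  exact le_trans h1 h

lemma laxext_graph (E : LaxExt V F) {X Y K : Type u} (h : X → Y) (g : VRel V Y K) :
    E.ext (vcomp g (graph h)) = fun t s => E.ext g (Functor.map h t) s := by
  funext t s
  apply le_antisymm
  · have h1 : (1 : V) ≤ E.ext (vconv (graph h)) (Functor.map h t) t := by
      refine le_trans ?_ (E.map_conv_le h (Functor.map h t) t)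
      exact le_iSup (fun _ : Functor.map h t = Functor.map h t => (1 : V)) rfl
    calc E.ext (vcomp g (graph h)) t s
        = 1 * E.ext (vcomp g (graph h)) t s := (one_mul _).symm
      _ ≤ E.ext (vconv (graph h)) (Functor.map h t) t * E.ext (vcomp g (graph h)) t s :=
          mul_le_mul_left h1 _
      _ ≤ vcomp (E.ext (vcomp g (graph h))) (E.ext (vconv (graph h))) (Functor.map h t) s :=
          le_iSup_of_le t le_rfl
      _ ≤ E.ext (vcomp (vcomp g (graph h)) (vconv (graph h))) (Functor.map h t) s :=
          E.lax_comp _ _ _ _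
      _ ≤ E.ext g (Functor.map h t) s := E.mono (vcomp_graph_conv_le g h) _ _
  · have h2 : (1 : V) ≤ E.ext (graph h) t (Functor.map h t) := by
      refine le_trans ?_ (E.map_le h t (Functor.map h t))
      exact le_iSup (fun _ : Functor.map h t = Functor.map h t => (1 : V)) rfl
    calc E.ext g (Functor.map h t) s
        = 1 * E.ext g (Functor.map h t) s := (one_mul _).symm
      _ ≤ E.ext (graph h) t (Functor.map h t) * E.ext g (Functor.map h t) s :=
          mul_le_mul_left h2 _
      _ ≤ vcomp (E.ext g) (E.ext (graph h)) t s := le_iSup_of_le (Functor.map h t) le_rfl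
      _ ≤ E.ext (vcomp g (graph h)) t s := E.lax_comp _ _ _ _

end AuxProof


open Paper in
/-- A functor `F` has a separating class of monotone
predicate liftings if and only if it admits a lax extension `F̂` such that every
`V`-category `(FX, F̂1_X)` is separated. -/
theorem separating_iff_separated_laxext {V : Type u} [CommMonoid V] [CompleteLattice V]
    [IsQuantale V] {F : Type u → Type u} [Functor F] [LawfulFunctor F] :
    (∃ (ι : Type (u + 1)) (κ : ι → Type u) (μ : ∀ j, PredLift V F (κ j)),
        (∀ j, (μ j).Monotone) ∧
        ∀ (X : Type u) (x y : F X), x ≠ y →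
          ∃ (j : ι) (g : VRel V X (κ j)), (μ j).app g x ≠ (μ j).app g y) ↔
    (∃ E : LaxExt V F, ∀ (X : Type u) (x y : F X),
        (1 : V) ≤ E.ext (idRel V X) x y → (1 : V) ≤ E.ext (idRel V X) y x → x = y) := by
  constructor
  · rintro ⟨ι, κ, μ, hmono, hsep⟩
    refine ⟨⟨fun {X Y} r x y => ⨅ j : ι, ⨅ g : VRel V Y (κ j),
        qhom ((μ j).app g y PUnit.unit) ((μ j).app (vcomp g r) x PUnit.unit),
        ?_, ?_, ?_, ?_⟩, ?_⟩
    · -- mono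
      intro X Y r r' h x y
      exact iInf_mono fun j => iInf_mono fun g =>
        qhom_mono ((hmono j) (vcomp_mono le_rfl h) x PUnit.unit)
    · -- lax_comp
      intro X Y Z r s x z
      refine iSup_le fun y => ?_
      refine le_iInf fun j => le_iInf fun g => le_qhom' ?_
      have h1 : (⨅ j' : ι, ⨅ g' : VRel V Z (κ j'),
            qhom ((μ j').app g' z PUnit.unit) ((μ j').app (vcomp g' s) y PUnit.unit))
          ≤ qhom ((μ j).app g z PUnit.unit) ((μ j).app (vcomp g s) y PUnit.unit) :=
        iInf_le_of_le j (iInf_le _ g)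
      have h2 : (⨅ j' : ι, ⨅ g' : VRel V Y (κ j'),
            qhom ((μ j').app g' y PUnit.unit) ((μ j').app (vcomp g' r) x PUnit.unit))
          ≤ qhom ((μ j).app (vcomp g s) y PUnit.unit)
              ((μ j).app (vcomp (vcomp g s) r) x PUnit.unit) :=
        iInf_le_of_le j (iInf_le _ (vcomp g s))
      calc (μ j).app g z PUnit.unit *
            ((⨅ j' : ι, ⨅ g' : VRel V Y (κ j'),
              qhom ((μ j').app g' y PUnit.unit) ((μ j').app (vcomp g' r) x PUnit.unit)) *
             (⨅ j' : ι, ⨅ g' : VRel V Z (κ j'),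
              qhom ((μ j').app g' z PUnit.unit) ((μ j').app (vcomp g' s) y PUnit.unit)))
          = ((μ j).app g z PUnit.unit *
             (⨅ j' : ι, ⨅ g' : VRel V Z (κ j'),
              qhom ((μ j').app g' z PUnit.unit) ((μ j').app (vcomp g' s) y PUnit.unit))) *
            (⨅ j' : ι, ⨅ g' : VRel V Y (κ j'),
              qhom ((μ j').app g' y PUnit.unit) ((μ j').app (vcomp g' r) x PUnit.unit)) := by
            rw [mul_left_comm, mul_comm]
        _ ≤ (μ j).app (vcomp g s) y PUnit.unit *
            (⨅ j' : ι, ⨅ g' : VRel V Y (κ j'),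
              qhom ((μ j').app g' y PUnit.unit) ((μ j').app (vcomp g' r) x PUnit.unit)) := by
            refine mul_le_mul_left ?_ _
            exact le_trans (mul_le_mul_right h1 _) (qhom_mul_le' _ _)
        _ ≤ (μ j).app (vcomp (vcomp g s) r) x PUnit.unit :=
            le_trans (mul_le_mul_right h2 _) (qhom_mul_le' _ _)
        _ = (μ j).app (vcomp g (vcomp s r)) x PUnit.unit := by rw [vcomp_assoc']
    · -- map_le
      intro X Y f x y
      refine iSup_le fun hxy => le_iInf fun j => le_iInf fun g => one_le_qhom' ?_
      rw [(μ j).natural f g, vcomp_graph, ← hxy]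
    · -- map_conv_le
      intro X Y f a b
      refine iSup_le fun hba => le_iInf fun j => le_iInf fun g => one_le_qhom' ?_
      have hm := (hmono j) (le_vcomp_conv_graph g f)
      rw [(μ j).natural f (vcomp g (vconv (graph f))), vcomp_graph] at hm
      calc (μ j).app g b PUnit.unit
          ≤ (μ j).app (vcomp g (vconv (graph f))) (Functor.map f b) PUnit.unit :=
            hm b PUnit.unit
        _ = (μ j).app (vcomp g (vconv (graph f))) a PUnit.unit := by rw [hba]
    · -- separation
      intro X x y h1 h2
      by_contra hne
      obtain ⟨j, g, hgne⟩ := hsep X x y hne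
      apply hgne
      have h1' : (1 : V) ≤ ⨅ j' : ι, ⨅ g' : VRel V X (κ j'),
          qhom ((μ j').app g' y PUnit.unit)
            ((μ j').app (vcomp g' (idRel V X)) x PUnit.unit) := h1
      have h2' : (1 : V) ≤ ⨅ j' : ι, ⨅ g' : VRel V X (κ j'),
          qhom ((μ j').app g' x PUnit.unit)
            ((μ j').app (vcomp g' (idRel V X)) y PUnit.unit) := h2
      have a1 : (μ j).app g y PUnit.unit ≤ (μ j).app g x PUnit.unit := by
        have := le_of_one_le_qhom' (le_trans h1' (iInf_le_of_le j (iInf_le _ g)))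
        rwa [vcomp_idRel'] at this
      have a2 : (μ j).app g x PUnit.unit ≤ (μ j).app g y PUnit.unit := by
        have := le_of_one_le_qhom' (le_trans h2' (iInf_le_of_le j (iInf_le _ g)))
        rwa [vcomp_idRel'] at this
      funext z
      cases z
      exact le_antisymm a2 a1
  · rintro ⟨E, hsepE⟩
    refine ⟨(K : Type u) × F K, fun j => j.1, fun j =>
      ⟨fun {X} f t _ => E.ext f t j.2, ?_⟩, ?_, ?_⟩
    · intro X Y h g
      funext t z
      show E.ext (vcomp g (graph h)) t j.2
        = vcomp (fun t (_ : PUnit) => E.ext g t j.2) (graph (Functor.map h)) t z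
      rw [laxext_graph E h g, vcomp_graph]
    · intro j X f f' hff t z
      exact E.mono hff t j.2
    · intro X x y hxy
      by_contra hc
      push_neg at hc
      have e1 := hc ⟨X, y⟩ (idRel V X)
      have e2 := hc ⟨X, x⟩ (idRel V X)
      have r1 : (1 : V) ≤ E.ext (idRel V X) x y :=
        (one_le_ext_idRel E y).trans (le_of_eq (congrFun e1 PUnit.unit).symm)
      have r2 : (1 : V) ≤ E.ext (idRel V X) y x :=
        (one_le_ext_idRel E x).trans (le_of_eq (congrFun e2 PUnit.unit))
      exact hxy (hsepE X x y r1 r2)
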